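/- arXiv:1208.2703 — 4 statements merged into one kernel-verified Lean document; each statement's English description precedes it below -/
import Mathlib

section
/- Let (V, c) be a finite network, let F ⊆ V, and let u, v : V → ℝ. Then (1/2) · ∑_{(x,y) ∈ V × V with x ∈ F or y ∈ F} c(x,y)·(u(x) − u(y))·(v(x) − v(y)) = ∑_{x ∈ F} Δu(x)·v(x) + ∑_{x ∈ δF} (∂u/∂n(F)(x))·v(x). (The left-hand sum ranges over ordered pairs, so every edge having at least one endpoint in F is counted twice, which accounts for the factor 1/2.) -/
open Finset

/-- **The first Green identity** for a finite network `(V, c)`: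
`(1/2) · ∑_{(x,y), x ∈ F ∨ y ∈ F} c(x,y)(u(x)−u(y))(v(x)−v(y))
  = ∑_{x ∈ F} Δu(x)·v(x) + ∑_{x ∈ δF} (∂u/∂n(F)(x))·v(x)`. -/
theorem green_identity {V : Type*} [Fintype V] [DecidableEq V]
    (c : V → V → ℝ)
    (hsymm : ∀ x y, c x y = c y x)
    (hnonneg : ∀ x y, 0 ≤ c x y)
    (hdiag : ∀ x, c x x = 0)
    (F : Finset V) (B : Finset V)
    (hB : ∀ x, x ∈ B ↔ x ∉ F ∧ ∃ y ∈ F, 0 < c x y)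
    (u v : V → ℝ) :
    (1 / 2) * ∑ x : V, ∑ y : V,
        (if x ∈ F ∨ y ∈ F then c x y * (u x - u y) * (v x - v y) else 0)
      = ∑ x ∈ F, (∑ y : V, c x y * (u x - u y)) * v x
        + ∑ x ∈ B, (∑ y ∈ F, c x y * (u x - u y)) * v x := by
  classical
  set T : ℝ := ∑ x : V, ∑ y : V,
      (if x ∈ F ∨ y ∈ F then c x y * (u x - u y) * v x else 0) with hT
  have key : ∑ x : V, ∑ y : V,
      (if x ∈ F ∨ y ∈ F then c x y * (u x - u y) * (v x - v y) else 0) = 2 * T := by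
    have h1 : ∀ x y : V,
        (if x ∈ F ∨ y ∈ F then c x y * (u x - u y) * (v x - v y) else 0)
          = (if x ∈ F ∨ y ∈ F then c x y * (u x - u y) * v x else 0)
            - (if x ∈ F ∨ y ∈ F then c x y * (u x - u y) * v y else 0) := by
      intro x y; split <;> ring
    have h2 : ∑ x : V, ∑ y : V,
        (if x ∈ F ∨ y ∈ F then c x y * (u x - u y) * v y else 0) = -T := by
      rw [Finset.sum_comm]
      rw [hT, ← Finset.sum_neg_distrib]
      refine Finset.sum_congr rfl fun y _ => ?_
      rw [← Finset.sum_neg_distrib]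
      refine Finset.sum_congr rfl fun x _ => ?_
      split_ifs with ha hb hb2
      · rw [hsymm x y]; ring
      · exact absurd ha.symm hb
      · exact absurd hb2.symm ha
      · ring
    simp_rw [h1]
    simp_rw [Finset.sum_sub_distrib]
    rw [h2, ← hT]
    ring
  rw [key]
  have hsplit : T = ∑ x ∈ F, (∑ y : V, c x y * (u x - u y)) * v x
      + ∑ x ∈ Fᶜ, (∑ y ∈ F, c x y * (u x - u y)) * v x := by
    rw [hT, ← Finset.sum_add_sum_compl F]
    congr 1
    · refine Finset.sum_congr rfl fun x hx => ?_
      rw [Finset.sum_mul]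
      refine Finset.sum_congr rfl fun y _ => ?_
      rw [if_pos (Or.inl hx)]
    · refine Finset.sum_congr rfl fun x hx => ?_
      rw [Finset.mem_compl] at hx
      rw [Finset.sum_mul]
      simp only [hx, false_or, Finset.sum_ite_mem, Finset.univ_inter]
  have hBsub : B ⊆ Fᶜ := by
    intro x hx
    rw [Finset.mem_compl]
    exact ((hB x).1 hx).1
  have hvanish : ∀ x ∈ Fᶜ, x ∉ B → (∑ y ∈ F, c x y * (u x - u y)) * v x = 0 := by
    intro x hx hxB
    rw [Finset.mem_compl] at hx
    have hc : ∀ y ∈ F, c x y = 0 := by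
      intro y hy
      by_contra h
      exact hxB ((hB x).2 ⟨hx, y, hy, lt_of_le_of_ne (hnonneg x y) (Ne.symm h)⟩)
    have : ∑ y ∈ F, c x y * (u x - u y) = 0 :=
      Finset.sum_eq_zero fun y hy => by rw [hc y hy, zero_mul]
    rw [this, zero_mul]
  rw [hsplit, ← Finset.sum_subset hBsub hvanish]
  ring
end

section
/- Let (V, c) be a finite connected network whose vertex set is partitioned as V = F ⊔ E₁ ⊔ E₂ with E₁ and E₂ nonempty, let k > 0, and let g : V → ℝ satisfy g ≡ k on E₁, g ≡ 0 on E₂, and Δg(x) = 0 for every x ∈ F. Assume further that g(x) ≠ g(y) whenever x and y are adjacent, unless x and y both lie in E₁ or both lie in E₂. Then there exists a path x₀, x₁, …, x_n in the network (consecutive vertices adjacent) with x₀ ∈ E₁, x_n ∈ E₂, x_i ∈ F for all 0 < i < n, along which g is strictly decreasing: g(x₀) > g(x₁) > ⋯ > g(x_n). In particular the path is simple. -/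
open Finset

/-- **Existence of a slit.** Let `g` solve the discrete Dirichlet boundary value
problem on a finite connected network with boundary values `k > 0` on `E₁` and `0`
on `E₂`, with no two adjacent vertices sharing a `g`-value unless both lie in `E₁`
or both lie in `E₂`. Then there is a path from `E₁` to `E₂`, through interior
vertices, along which `g` is strictly decreasing. -/
theorem slit_exists {V : Type*} [Fintype V] [DecidableEq V]
    (c : V → V → ℝ)
    (hsymm : ∀ x y, c x y = c y x)
    (hnonneg : ∀ x y, 0 ≤ c x y)
    (hdiag : ∀ x, c x x = 0)
    (G : SimpleGraph V) (hG : ∀ x y, G.Adj x y ↔ 0 < c x y)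
    (hconn : G.Connected)
    (F E₁ E₂ : Finset V)
    (hFE₁ : Disjoint F E₁) (hFE₂ : Disjoint F E₂) (hE₁E₂ : Disjoint E₁ E₂)
    (hcover : F ∪ E₁ ∪ E₂ = Finset.univ)
    (hE₁ : E₁.Nonempty) (hE₂ : E₂.Nonempty)
    (k : ℝ) (hk : 0 < k)
    (g : V → ℝ)
    (hgE₁ : ∀ x ∈ E₁, g x = k) (hgE₂ : ∀ x ∈ E₂, g x = 0)
    (hharm : ∀ x ∈ F, ∑ y : V, c x y * (g x - g y) = 0)
    (hgen : ∀ x y, 0 < c x y → g x = g y →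
      (x ∈ E₁ ∧ y ∈ E₁) ∨ (x ∈ E₂ ∧ y ∈ E₂)) :
    ∃ (n : ℕ) (x : Fin (n + 1) → V),
      x 0 ∈ E₁ ∧ x (Fin.last n) ∈ E₂ ∧
      (∀ i : Fin (n + 1), 0 < (i : ℕ) → (i : ℕ) < n → x i ∈ F) ∧
      (∀ i : Fin n, 0 < c (x i.castSucc) (x i.succ)) ∧
      (∀ i : Fin n, g (x i.succ) < g (x i.castSucc)) := by
  classical
  obtain ⟨a, ha⟩ := hE₁
  obtain ⟨b, hb⟩ := hE₂
  have hab : a ≠ b := by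
    rintro rfl; exact (Finset.disjoint_left.mp hE₁E₂ ha) hb
  -- every vertex has a neighbor
  have hnbr : ∀ x : V, ∃ y, 0 < c x y := by
    intro x
    have hne : ∃ z : V, z ≠ x := by
      by_cases hxa : x = a
      · exact ⟨b, by rw [hxa]; exact fun h => hab h.symm⟩
      · exact ⟨a, fun h => hxa h.symm⟩
    obtain ⟨z, hz⟩ := hne
    obtain ⟨w⟩ := hconn.preconnected x z
    cases w with
    | nil => exact absurd rfl hz.symm
    | cons h p => exact ⟨_, (hG _ _).mp h⟩
  -- maximum principle
  have hmax : ∀ x, g x ≤ k := by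
    obtain ⟨x₀, -, hx₀⟩ := Finset.exists_max_image univ g ⟨a, mem_univ a⟩
    have hx₀k : g x₀ ≤ k := by
      have hmem : x₀ ∈ F ∪ E₁ ∪ E₂ := hcover ▸ mem_univ x₀
      rcases mem_union.mp hmem with h | h
      · rcases mem_union.mp h with hF | h1
        · exfalso
          have hsum := hharm x₀ hF
          have hterm : ∀ y ∈ univ, 0 ≤ c x₀ y * (g x₀ - g y) := fun y _ =>
            mul_nonneg (hnonneg _ _) (sub_nonneg.mpr (hx₀ y (mem_univ y)))
          have hzero := (Finset.sum_eq_zero_iff_of_nonneg hterm).mp hsum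
          obtain ⟨y, hy⟩ := hnbr x₀
          have h0 := hzero y (mem_univ y)
          have hgy : g x₀ = g y := by
            rcases mul_eq_zero.mp h0 with h | h
            · exact absurd h (ne_of_gt hy)
            · linarith [sub_eq_zero.mp h]
          rcases hgen x₀ y hy hgy with ⟨h₁, _⟩ | ⟨h₂, _⟩
          · exact Finset.disjoint_left.mp hFE₁ hF h₁
          · exact Finset.disjoint_left.mp hFE₂ hF h₂
        · exact le_of_eq (hgE₁ x₀ h1)
      · rw [hgE₂ x₀ h]; exact hk.le
    intro x; exact (hx₀ x (mem_univ x)).trans hx₀k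
  -- descent step from interior vertices
  have hdesc : ∀ x ∈ F, ∃ y, 0 < c x y ∧ g y < g x := by
    intro x hF
    by_contra hcon
    push_neg at hcon
    obtain ⟨y₀, hy₀⟩ := hnbr x
    have hgy₀ : g x < g y₀ := by
      rcases lt_or_eq_of_le (hcon y₀ hy₀) with h | h
      · exact h
      · exfalso
        rcases hgen x y₀ hy₀ h with ⟨h₁, _⟩ | ⟨h₂, _⟩
        · exact Finset.disjoint_left.mp hFE₁ hF h₁
        · exact Finset.disjoint_left.mp hFE₂ hF h₂
    have hlt : ∑ y : V, c x y * (g x - g y) < ∑ y : V, (0 : ℝ) := by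
      apply Finset.sum_lt_sum
      · intro y _
        rcases (hnonneg x y).lt_or_eq with h | h
        · have := hcon y h
          nlinarith
        · rw [← h]; ring_nf; simp
      · refine ⟨y₀, mem_univ y₀, ?_⟩
        nlinarith
    rw [Finset.sum_const_zero] at hlt
    linarith [hharm x hF]
  -- prepending a vertex to a decreasing path
  have cons_path : ∀ (u : V) (m : ℕ) (p : Fin (m+1) → V),
      0 < c u (p 0) → g (p 0) < g u →
      p (Fin.last m) ∈ E₂ →
      (∀ i : Fin (m+1), (i:ℕ) < m → p i ∈ F) →
      (∀ i : Fin m, 0 < c (p i.castSucc) (p i.succ)) →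
      (∀ i : Fin m, g (p i.succ) < g (p i.castSucc)) →
      ((Fin.cons u p : Fin (m+2) → V) (Fin.last (m+1)) ∈ E₂) ∧
      (∀ i : Fin (m+2), 0 < (i:ℕ) → (i:ℕ) < m+1 → (Fin.cons u p : Fin (m+2) → V) i ∈ F) ∧
      (∀ i : Fin (m+1), 0 < c ((Fin.cons u p : Fin (m+2) → V) i.castSucc) ((Fin.cons u p : Fin (m+2) → V) i.succ)) ∧
      (∀ i : Fin (m+1), g ((Fin.cons u p : Fin (m+2) → V) i.succ) < g ((Fin.cons u p : Fin (m+2) → V) i.castSucc)) := by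
    intro u m p hadj hdec hlast hF' hc' hg'
    refine ⟨?_, ?_, ?_, ?_⟩
    · rw [← Fin.succ_last, Fin.cons_succ]; exact hlast
    · intro i
      induction i using Fin.cases with
      | zero => intro h; simp at h
      | succ j =>
        intro _ hj
        rw [Fin.cons_succ]
        exact hF' j (by simpa using Nat.lt_of_succ_lt_succ (by simpa using hj))
    · intro i
      induction i using Fin.cases with
      | zero =>
        simpa using hadj
      | succ j =>
        rw [← Fin.succ_castSucc, Fin.cons_succ, Fin.cons_succ]
        exact hc' j
    · intro i
      induction i using Fin.cases with
      | zero =>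
        simpa using hdec
      | succ j =>
        rw [← Fin.succ_castSucc, Fin.cons_succ, Fin.cons_succ]
        exact hg' j
  -- main recursion: decreasing path from any interior or E₂ vertex
  have key : ∀ N : ℕ, ∀ x : V, (univ.filter (fun z => g z < g x)).card ≤ N →
      (x ∈ F ∨ x ∈ E₂) →
      ∃ (n : ℕ) (p : Fin (n+1) → V), p 0 = x ∧ p (Fin.last n) ∈ E₂ ∧
        (∀ i : Fin (n+1), (i:ℕ) < n → p i ∈ F) ∧
        (∀ i : Fin n, 0 < c (p i.castSucc) (p i.succ)) ∧
        (∀ i : Fin n, g (p i.succ) < g (p i.castSucc)) := by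
    intro N
    induction N with
    | zero =>
      intro x hcard hx
      rcases hx with hF | hE
      · exfalso
        obtain ⟨y, hy, hgy⟩ := hdesc x hF
        have hmem : y ∈ univ.filter (fun z => g z < g x) :=
          mem_filter.mpr ⟨mem_univ y, hgy⟩
        have := Finset.card_pos.mpr ⟨y, hmem⟩
        omega
      · exact ⟨0, fun _ => x, rfl, hE, fun i hi => absurd hi (by omega),
          fun i => i.elim0, fun i => i.elim0⟩
    | succ N ih =>
      intro x hcard hx
      rcases hx with hF | hE
      · obtain ⟨y, hy, hgy⟩ := hdesc x hF
        have hyk : g y < k := lt_of_lt_of_le hgy (hmax x)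
        have hyE₁ : y ∉ E₁ := fun h => by rw [hgE₁ y h] at hyk; exact lt_irrefl k hyk
        have hymem : y ∈ F ∨ y ∈ E₂ := by
          have hm : y ∈ F ∪ E₁ ∪ E₂ := hcover ▸ mem_univ y
          rcases mem_union.mp hm with h | h
          · rcases mem_union.mp h with h | h
            · exact Or.inl h
            · exact absurd h hyE₁
          · exact Or.inr h
        have hsub : univ.filter (fun z => g z < g y) ⊂ univ.filter (fun z => g z < g x) := by
          constructor
          · intro z hz
            have := (mem_filter.mp hz).2
            exact mem_filter.mpr ⟨mem_univ z, lt_trans this hgy⟩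
          · intro hsub'
            have hymem' : y ∈ univ.filter (fun z => g z < g x) :=
              mem_filter.mpr ⟨mem_univ y, hgy⟩
            have := (mem_filter.mp (hsub' hymem')).2
            exact lt_irrefl _ this
        have hcard' : (univ.filter (fun z => g z < g y)).card ≤ N := by
          have := Finset.card_lt_card hsub
          omega
        obtain ⟨m, p, hp0, hplast, hpF, hpc, hpg⟩ := ih y hcard' hymem
        have hadj : 0 < c x (p 0) := by rw [hp0]; exact hy
        have hdec : g (p 0) < g x := by rw [hp0]; exact hgy
        obtain ⟨h1, h2, h3, h4⟩ := cons_path x m p hadj hdec hplast hpF hpc hpg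
        refine ⟨m+1, Fin.cons x p, by simp, h1, ?_, h3, h4⟩
        intro i hi
        induction i using Fin.cases with
        | zero => simpa using hF
        | succ j => exact h2 j.succ (by simp) hi
      · exact ⟨0, fun _ => x, rfl, hE, fun i hi => absurd hi (by omega),
          fun i => i.elim0, fun i => i.elim0⟩
  -- initial edge leaving E₁
  have hedge : ∃ u ∈ E₁, ∃ v, 0 < c u v ∧ v ∉ E₁ := by
    have hbE₁ : b ∉ E₁ := fun h => (Finset.disjoint_left.mp hE₁E₂ h) hb
    have hstep : ∀ (s t : V), G.Walk s t → s ∈ E₁ → t ∉ E₁ →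
        ∃ u ∈ E₁, ∃ v, 0 < c u v ∧ v ∉ E₁ := by
      intro s t w
      induction w with
      | nil => intro hs ht; exact absurd hs ht
      | @cons s' t' r' h p ih =>
        intro hs ht
        by_cases hmid : t' ∈ E₁
        · exact ih hmid ht
        · exact ⟨s', hs, t', (hG _ _).mp h, hmid⟩
    obtain ⟨w⟩ := hconn.preconnected a b
    exact hstep a b w ha hbE₁
  obtain ⟨u, hu, v, huv, hvE₁⟩ := hedge
  have hgu : g u = k := hgE₁ u hu
  have hvk : g v < g u := by
    have hle : g v ≤ g u := by rw [hgu]; exact hmax v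
    rcases lt_or_eq_of_le hle with h | h
    · exact h
    · exfalso
      rcases hgen u v huv h.symm with ⟨_, h₁⟩ | ⟨h₂, _⟩
      · exact hvE₁ h₁
      · exact (Finset.disjoint_left.mp hE₁E₂ hu) h₂
  have hvmem : v ∈ F ∨ v ∈ E₂ := by
    have hm : v ∈ F ∪ E₁ ∪ E₂ := hcover ▸ mem_univ v
    rcases mem_union.mp hm with h | h
    · rcases mem_union.mp h with h | h
      · exact Or.inl h
      · exact absurd h hvE₁
    · exact Or.inr h
  obtain ⟨m, p, hp0, hplast, hpF, hpc, hpg⟩ :=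
    key (univ.filter (fun z => g z < g v)).card v le_rfl hvmem
  have hadj : 0 < c u (p 0) := by rw [hp0]; exact huv
  have hdec : g (p 0) < g u := by rw [hp0]; exact hvk
  obtain ⟨h1, h2, h3, h4⟩ := cons_path u m p hadj hdec hplast hpF hpc hpg
  exact ⟨m+1, Fin.cons u p, by simpa using hu, h1, h2, h3, h4⟩
end

section
/- Let (V, c) be a finite connected network whose vertex set is partitioned as V = F ⊔ E₁ ⊔ E₂ with E₁ and E₂ nonempty, let k > 0, and let g : V → ℝ satisfy g ≡ k on E₁, g ≡ 0 on E₂, and Δg(x) = 0 for every x ∈ F. Then: (i) ∂g/∂n(F)(x) ≥ 0 for every x ∈ E₁ ∩ δF; (ii) ∂g/∂n(F)(x) ≤ 0 for every x ∈ E₂ ∩ δF; and (iii) ∑_{x ∈ E₁ ∩ δF} ∂g/∂n(F)(x) = ∑_{x ∈ E₂ ∩ δF} |∂g/∂n(F)(x)|. -/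
open Finset

lemma my_max_on_boundary {V : Type*} [Fintype V] [DecidableEq V]
    (c : V → V → ℝ) (hnonneg : ∀ x y, 0 ≤ c x y)
    (G : SimpleGraph V) (hG : ∀ x y, G.Adj x y ↔ 0 < c x y) (hconn : G.Connected)
    (F T : Finset V) (hT : ∀ x : V, x ∉ F → x ∈ T) (hTne : T.Nonempty)
    (g : V → ℝ) (hharm : ∀ x ∈ F, ∑ y : V, c x y * (g x - g y) = 0)
    (x : V) : ∃ z ∈ T, g x ≤ g z := by
  obtain ⟨x₀, -, hx₀⟩ := Finset.exists_max_image (univ : Finset V) g ⟨x, mem_univ x⟩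
  obtain ⟨y₀, hy₀⟩ := hTne
  have key : ∀ (a : V) (w : G.Walk a y₀), g x₀ ≤ g a → ∃ z ∈ T, g x₀ ≤ g z := by
    intro a w
    induction w with
    | nil => exact fun h => ⟨_, hy₀, h⟩
    | @cons a b _ hab w ih =>
      intro ha
      by_cases haF : a ∈ F
      · have hterm : ∀ y ∈ (univ : Finset V), 0 ≤ c a y * (g a - g y) := by
          intro y _
          have := hx₀ y (mem_univ y)
          have := hnonneg a y
          nlinarith
        have hz := (Finset.sum_eq_zero_iff_of_nonneg hterm).mp (hharm a haF) b (mem_univ b)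
        have hcab : 0 < c a b := (hG a b).mp hab
        have : g a - g b = 0 := by
          rcases mul_eq_zero.mp hz with h | h
          · exact absurd h (ne_of_gt hcab)
          · exact h
        exact ih hy₀ (by linarith)
      · exact ⟨a, hT a haF, ha⟩
  obtain ⟨z, hz, hz'⟩ := key x₀ (hconn x₀ y₀).some le_rfl
  exact ⟨z, hz, le_trans (hx₀ x (mem_univ x)) hz'⟩

/-- For the solution `g` of the discrete Dirichlet boundary value problem with
values `k > 0` on `E₁` and `0` on `E₂`: the normal derivative of `g` is nonnegative
on `E₁ ∩ δF`, nonpositive on `E₂ ∩ δF`, and the flux across `E₁` equals the integral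
of the absolute value of the normal derivative along `E₂`. -/
theorem dirichlet_flux_signs {V : Type*} [Fintype V] [DecidableEq V]
    (c : V → V → ℝ)
    (hsymm : ∀ x y, c x y = c y x)
    (hnonneg : ∀ x y, 0 ≤ c x y)
    (hdiag : ∀ x, c x x = 0)
    (G : SimpleGraph V) (hG : ∀ x y, G.Adj x y ↔ 0 < c x y)
    (hconn : G.Connected)
    (F E₁ E₂ : Finset V)
    (hFE₁ : Disjoint F E₁) (hFE₂ : Disjoint F E₂) (hE₁E₂ : Disjoint E₁ E₂)
    (hcover : F ∪ E₁ ∪ E₂ = Finset.univ)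
    (hE₁ : E₁.Nonempty) (hE₂ : E₂.Nonempty)
    (k : ℝ) (hk : 0 < k)
    (g : V → ℝ)
    (hgE₁ : ∀ x ∈ E₁, g x = k) (hgE₂ : ∀ x ∈ E₂, g x = 0)
    (hharm : ∀ x ∈ F, ∑ y : V, c x y * (g x - g y) = 0)
    (B : Finset V)
    (hB : ∀ x, x ∈ B ↔ x ∉ F ∧ ∃ y ∈ F, 0 < c x y) :
    (∀ x ∈ E₁ ∩ B, 0 ≤ ∑ y ∈ F, c x y * (g x - g y)) ∧
    (∀ x ∈ E₂ ∩ B, ∑ y ∈ F, c x y * (g x - g y) ≤ 0) ∧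
    ∑ x ∈ E₁ ∩ B, ∑ y ∈ F, c x y * (g x - g y)
      = ∑ x ∈ E₂ ∩ B, |∑ y ∈ F, c x y * (g x - g y)| := by
  set T : Finset V := E₁ ∪ E₂ with hT
  have hTmem : ∀ x : V, x ∉ F → x ∈ T := by
    intro x hx
    have : x ∈ F ∪ E₁ ∪ E₂ := hcover ▸ mem_univ x
    rcases mem_union.mp this with h | h
    · rcases mem_union.mp h with h | h
      · exact absurd h hx
      · exact mem_union_left _ h
    · exact mem_union_right _ h
  have hTne : T.Nonempty := ⟨hE₁.choose, mem_union_left _ hE₁.choose_spec⟩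
  -- boundary values: g z ∈ {k, 0} for z ∈ T
  have hTval : ∀ z ∈ T, g z = k ∨ g z = 0 := by
    intro z hz
    rcases mem_union.mp hz with h | h
    · exact Or.inl (hgE₁ z h)
    · exact Or.inr (hgE₂ z h)
  -- maximum principle: 0 ≤ g ≤ k
  have hub : ∀ y : V, g y ≤ k := by
    intro y
    obtain ⟨z, hz, hle⟩ := my_max_on_boundary c hnonneg G hG hconn F T hTmem hTne g hharm y
    rcases hTval z hz with h | h <;> linarith
  have hlb : ∀ y : V, 0 ≤ g y := by
    intro y
    have hharm' : ∀ x ∈ F, ∑ y : V, c x y * ((-g) x - (-g) y) = 0 := by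
      intro x hx
      have := hharm x hx
      simp only [Pi.neg_apply]
      rw [← neg_eq_zero, ← Finset.sum_neg_distrib]
      rw [← this]
      apply Finset.sum_congr rfl
      intro z _
      ring
    obtain ⟨z, hz, hle⟩ := my_max_on_boundary c hnonneg G hG hconn F T hTmem hTne (-g) hharm' y
    simp only [Pi.neg_apply] at hle
    rcases hTval z hz with h | h <;> linarith
  -- (i)
  have part1 : ∀ x ∈ E₁ ∩ B, 0 ≤ ∑ y ∈ F, c x y * (g x - g y) := by
    intro x hx
    have hx₁ : x ∈ E₁ := (mem_inter.mp hx).1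
    apply Finset.sum_nonneg
    intro y _
    have := hub y
    have := hnonneg x y
    have := hgE₁ x hx₁
    nlinarith
  -- (ii)
  have part2 : ∀ x ∈ E₂ ∩ B, ∑ y ∈ F, c x y * (g x - g y) ≤ 0 := by
    intro x hx
    have hx₂ : x ∈ E₂ := (mem_inter.mp hx).1
    apply Finset.sum_nonpos
    intro y _
    have := hlb y
    have := hnonneg x y
    have := hgE₂ x hx₂
    nlinarith
  refine ⟨part1, part2, ?_⟩
  -- if x ∈ T \ B then the normal derivative vanishes
  have hvanish : ∀ x ∈ T, x ∉ B → ∑ y ∈ F, c x y * (g x - g y) = 0 := by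
    intro x hxT hxB
    apply Finset.sum_eq_zero
    intro y hy
    have hxF : x ∉ F := by
      intro hxF
      rcases mem_union.mp hxT with h | h
      · exact (Finset.disjoint_left.mp hFE₁) hxF h
      · exact (Finset.disjoint_left.mp hFE₂) hxF h
    have : ¬ (0 < c x y) := fun h => hxB ((hB x).mpr ⟨hxF, y, hy, h⟩)
    have : c x y = 0 := le_antisymm (not_lt.mp this) (hnonneg x y)
    rw [this, zero_mul]
  have hsum₁ : ∑ x ∈ E₁ ∩ B, ∑ y ∈ F, c x y * (g x - g y)
      = ∑ x ∈ E₁, ∑ y ∈ F, c x y * (g x - g y) := by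
    apply Finset.sum_subset (inter_subset_left)
    intro x hx hxB
    exact hvanish x (mem_union_left _ hx) (fun h => hxB (mem_inter.mpr ⟨hx, h⟩))
  have hsum₂ : ∑ x ∈ E₂ ∩ B, ∑ y ∈ F, c x y * (g x - g y)
      = ∑ x ∈ E₂, ∑ y ∈ F, c x y * (g x - g y) := by
    apply Finset.sum_subset (inter_subset_left)
    intro x hx hxB
    exact hvanish x (mem_union_right _ hx) (fun h => hxB (mem_inter.mpr ⟨hx, h⟩))
  -- total flux across T is zero
  have hFc : ∀ x : V, x ∉ F → x ∈ T := hTmem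
  have huniv : ∀ x ∈ F, (univ : Finset V) = F ∪ T := by
    intro x _
    apply Finset.eq_of_subset_of_card_le
    · intro z _
      by_cases hz : z ∈ F
      · exact mem_union_left _ hz
      · exact mem_union_right _ (hTmem z hz)
    · exact Finset.card_le_card (Finset.subset_univ _)
  have hFT : Disjoint F T := by
    rw [hT, Finset.disjoint_union_right]
    exact ⟨hFE₁, hFE₂⟩
  have hsplit : ∑ x ∈ F, ∑ y ∈ F, c x y * (g x - g y)
      + ∑ x ∈ F, ∑ y ∈ T, c x y * (g x - g y) = 0 := by
    have : ∑ x ∈ F, ∑ y : V, c x y * (g x - g y) = 0 :=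
      Finset.sum_eq_zero hharm
    rw [← this]
    rw [← Finset.sum_add_distrib]
    apply Finset.sum_congr rfl
    intro x hx
    rw [huniv x hx, Finset.sum_union hFT]
  have hanti : ∑ x ∈ F, ∑ y ∈ F, c x y * (g x - g y) = 0 := by
    have h1 : ∑ x ∈ F, ∑ y ∈ F, c x y * (g x - g y)
        = ∑ y ∈ F, ∑ x ∈ F, c x y * (g x - g y) := Finset.sum_comm
    have h2 : ∑ y ∈ F, ∑ x ∈ F, c x y * (g x - g y)
        = - ∑ x ∈ F, ∑ y ∈ F, c x y * (g x - g y) := by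
      rw [← Finset.sum_neg_distrib]
      apply Finset.sum_congr rfl
      intro x _
      rw [← Finset.sum_neg_distrib]
      apply Finset.sum_congr rfl
      intro y _
      rw [hsymm y x]
      ring
    linarith [h1.trans h2]
  have hswap : ∑ x ∈ T, ∑ y ∈ F, c x y * (g x - g y)
      = - ∑ x ∈ F, ∑ y ∈ T, c x y * (g x - g y) := by
    rw [Finset.sum_comm, ← Finset.sum_neg_distrib]
    apply Finset.sum_congr rfl
    intro x _
    rw [← Finset.sum_neg_distrib]
    apply Finset.sum_congr rfl
    intro y _
    rw [hsymm y x]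
    ring
  have htotal : ∑ x ∈ T, ∑ y ∈ F, c x y * (g x - g y) = 0 := by
    rw [hswap]; linarith
  have hTsum : ∑ x ∈ E₁, ∑ y ∈ F, c x y * (g x - g y)
      + ∑ x ∈ E₂, ∑ y ∈ F, c x y * (g x - g y) = 0 := by
    rw [← Finset.sum_union hE₁E₂]
    exact htotal
  have habs : ∑ x ∈ E₂ ∩ B, |∑ y ∈ F, c x y * (g x - g y)|
      = - ∑ x ∈ E₂ ∩ B, ∑ y ∈ F, c x y * (g x - g y) := by
    rw [← Finset.sum_neg_distrib]
    apply Finset.sum_congr rfl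
    intro x hx
    exact abs_of_nonpos (part2 x hx)
  rw [habs, hsum₁, hsum₂]
  linarith
end

section
/- Let (V, c) be a finite connected network whose vertex set is partitioned as V = F ⊔ E₁ ⊔ E₂ with E₁ and E₂ nonempty, and assume no vertex of E₁ is adjacent to a vertex of E₂. Let k > 0 and let g : V → ℝ satisfy g ≡ k on E₁, g ≡ 0 on E₂, and Δg(x) = 0 for every x ∈ F. Then the total flux of g across E₁ is strictly positive: ∑_{x ∈ E₁ ∩ δF} ∂g/∂n(F)(x) > 0. -/
open Finset

private lemma walk_edge_ne {V : Type*} (G : SimpleGraph V) (g : V → ℝ) :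
    ∀ {a b : V}, G.Walk a b → g a ≠ g b → ∃ x y, G.Adj x y ∧ g x ≠ g y := by
  intro a b p
  induction p with
  | nil => intro h; exact absurd rfl h
  | @cons u v w hadj p ih =>
    intro h
    by_cases h1 : g u = g v
    · exact ih (h1 ▸ h)
    · exact ⟨u, v, hadj, h1⟩

/-- **Positivity of the period.** For the solution `g` of the discrete Dirichlet
boundary value problem with values `k > 0` on `E₁` and `0` on `E₂`, where no vertex
of `E₁` is adjacent to a vertex of `E₂`, the total flux of `g` across `E₁`
(the period of the conjugate function `g*`) is strictly positive. -/
theorem period_pos {V : Type*} [Fintype V] [DecidableEq V]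
    (c : V → V → ℝ)
    (hsymm : ∀ x y, c x y = c y x)
    (hnonneg : ∀ x y, 0 ≤ c x y)
    (hdiag : ∀ x, c x x = 0)
    (G : SimpleGraph V) (hG : ∀ x y, G.Adj x y ↔ 0 < c x y)
    (hconn : G.Connected)
    (F E₁ E₂ : Finset V)
    (hFE₁ : Disjoint F E₁) (hFE₂ : Disjoint F E₂) (hE₁E₂ : Disjoint E₁ E₂)
    (hcover : F ∪ E₁ ∪ E₂ = Finset.univ)
    (hE₁ : E₁.Nonempty) (hE₂ : E₂.Nonempty)
    (hsep : ∀ x ∈ E₁, ∀ y ∈ E₂, ¬ 0 < c x y)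
    (k : ℝ) (hk : 0 < k)
    (g : V → ℝ)
    (hgE₁ : ∀ x ∈ E₁, g x = k) (hgE₂ : ∀ x ∈ E₂, g x = 0)
    (hharm : ∀ x ∈ F, ∑ y : V, c x y * (g x - g y) = 0)
    (B : Finset V)
    (hB : ∀ x, x ∈ B ↔ x ∉ F ∧ ∃ y ∈ F, 0 < c x y) :
    0 < ∑ x ∈ E₁ ∩ B, ∑ y ∈ F, c x y * (g x - g y) := by
  classical
  set Δ : V → ℝ := fun x => ∑ y : V, c x y * (g x - g y) with hΔ
  set S : ℝ := ∑ x ∈ E₁ ∩ B, ∑ y ∈ F, c x y * (g x - g y) with hS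
  have hd1 : Disjoint (F ∪ E₁) E₂ := Finset.disjoint_union_left.mpr ⟨hFE₂, hE₁E₂⟩
  have hsplit : ∀ f : V → ℝ,
      ∑ y : V, f y = ∑ y ∈ F, f y + ∑ y ∈ E₁, f y + ∑ y ∈ E₂, f y := by
    intro f
    rw [← Finset.sum_union hFE₁, ← Finset.sum_union hd1, hcover]
  -- Step 1: the sum over E₁ ∩ B equals the sum over E₁
  have hstep1 : S = ∑ x ∈ E₁, ∑ y ∈ F, c x y * (g x - g y) := by
    rw [hS]
    apply Finset.sum_subset Finset.inter_subset_left
    intro x hx hxB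
    have hxB' : x ∉ B := fun h => hxB (Finset.mem_inter.mpr ⟨hx, h⟩)
    have hxF : x ∉ F := fun h => (Finset.disjoint_left.mp hFE₁) h hx
    apply Finset.sum_eq_zero
    intro y hy
    have h1 : ¬ 0 < c x y := fun h => hxB' ((hB x).mpr ⟨hxF, y, hy, h⟩)
    have h2 : c x y = 0 := le_antisymm (not_lt.mp h1) (hnonneg x y)
    simp [h2]
  -- Step 2: for x ∈ E₁, the flux through F equals Δ x
  have hstep2 : ∀ x ∈ E₁, ∑ y ∈ F, c x y * (g x - g y) = Δ x := by
    intro x hx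
    rw [hΔ]
    simp only
    rw [hsplit (fun y => c x y * (g x - g y))]
    have hz1 : ∑ y ∈ E₁, c x y * (g x - g y) = 0 := by
      apply Finset.sum_eq_zero
      intro y hy
      rw [hgE₁ x hx, hgE₁ y hy]
      ring
    have hz2 : ∑ y ∈ E₂, c x y * (g x - g y) = 0 := by
      apply Finset.sum_eq_zero
      intro y hy
      have : c x y = 0 := le_antisymm (not_lt.mp (hsep x hx y hy)) (hnonneg x y)
      simp [this]
    rw [hz1, hz2]; ring
  -- Step 3: weighted sum of Laplacian
  have hstep3 : ∑ x : V, g x * Δ x = k * S := by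
    rw [hsplit (fun x => g x * Δ x)]
    have hzF : ∑ x ∈ F, g x * Δ x = 0 :=
      Finset.sum_eq_zero fun x hx => by rw [hΔ]; simp only; rw [hharm x hx, mul_zero]
    have hzE₂ : ∑ x ∈ E₂, g x * Δ x = 0 :=
      Finset.sum_eq_zero fun x hx => by rw [hgE₂ x hx, zero_mul]
    have hE₁eq : ∑ x ∈ E₁, g x * Δ x = k * S := by
      rw [hstep1, Finset.mul_sum]
      apply Finset.sum_congr rfl
      intro x hx
      rw [hstep2 x hx, hgE₁ x hx]
    rw [hzF, hzE₂, hE₁eq]; ring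
  -- Step 4: Dirichlet energy identity
  have hA : ∑ x : V, ∑ y : V, c x y * (g x - g y) * g x = ∑ x : V, g x * Δ x := by
    apply Finset.sum_congr rfl
    intro x _
    rw [hΔ]
    simp only
    rw [Finset.mul_sum]
    apply Finset.sum_congr rfl
    intro y _
    ring
  have hswap : ∑ x : V, ∑ y : V, c y x * (g y - g x) * g y
      = ∑ x : V, ∑ y : V, c x y * (g x - g y) * g x := Finset.sum_comm
  have hstep4 : ∑ x : V, ∑ y : V, c x y * (g x - g y) ^ 2 = 2 * ∑ x : V, g x * Δ x := by
    have key : ∀ x y : V, c x y * (g x - g y) ^ 2 =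
        c x y * (g x - g y) * g x + c y x * (g y - g x) * g y := by
      intro x y; rw [hsymm x y]; ring
    calc ∑ x : V, ∑ y : V, c x y * (g x - g y) ^ 2
        = (∑ x : V, ∑ y : V, c x y * (g x - g y) * g x)
          + ∑ x : V, ∑ y : V, c y x * (g y - g x) * g y := by
          simp_rw [key, Finset.sum_add_distrib]
      _ = 2 * ∑ x : V, g x * Δ x := by rw [hswap, hA]; ring
  -- Step 5: energy is positive
  have hstep5 : 0 < ∑ x : V, ∑ y : V, c x y * (g x - g y) ^ 2 := by
    obtain ⟨a, ha⟩ := hE₁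
    obtain ⟨b, hb⟩ := hE₂
    have hne : g a ≠ g b := by
      rw [hgE₁ a ha, hgE₂ b hb]; exact ne_of_gt hk
    obtain ⟨x0, y0, hadj, hgne⟩ :=
      walk_edge_ne G g ((hconn.preconnected a b).some) hne
    have hc : 0 < c x0 y0 := (hG x0 y0).mp hadj
    have hterm : 0 < c x0 y0 * (g x0 - g y0) ^ 2 := by
      have h0 : g x0 - g y0 ≠ 0 := sub_ne_zero.mpr hgne
      positivity
    have hinner : ∀ x : V, 0 ≤ ∑ y : V, c x y * (g x - g y) ^ 2 := by
      intro x
      apply Finset.sum_nonneg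
      intro y _
      have := hnonneg x y
      positivity
    apply Finset.sum_pos' (fun x _ => hinner x)
    refine ⟨x0, Finset.mem_univ _, Finset.sum_pos' (fun y _ => ?_) ⟨y0, Finset.mem_univ _, hterm⟩⟩
    have := hnonneg x0 y; positivity
  have hfin : 0 < 2 * (k * S) := by rw [← hstep3, ← hstep4]; exact hstep5
  by_contra h
  push_neg at h
  nlinarith [hk, h, hfin]
end
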